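/- Formula for the Möbius function: let μ : S → ℤ satisfy, for every z ∈ S, ∑_{(a,b) ∈ S×S, a*b = z} μ(a) = 1 if z = 1 and = 0 otherwise (the sum is finite by Axiom III). Then: (1) μ(1) = 1; (2) if k ≥ 1, q : Fin k → S are pairwise distinct irreducible elements and u ∈ S satisfies ⋂ᵢ (q i)·S = u·S, then μ(u) = (−1)^k; (3) if u ≠ 1 and there is no k ≥ 1 together with pairwise distinct irreducibles q : Fin k → S such that ⋂ᵢ (q i)·S = u·S, then μ(u) = 0. -/
import Mathlib

open scoped BigOperators

/-- `u` divides `w` in `S`: `w ∈ u·S`. -/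
def SDvd {G : Type*} [Group G] (S : Submonoid G) (u w : G) : Prop := ∃ s ∈ S, w = u * s

/-- The left set `u·S = {u * s : s ∈ S}`. -/
def leftSet {G : Type*} [Group G] (S : Submonoid G) (u : G) : Set G := {w | ∃ s ∈ S, w = u * s}

/-- `τ(u)`: the number of ordered factorizations `u = v * w` with `v, w ∈ S`. -/
noncomputable def tau {G : Type*} [Group G] (S : Submonoid G) (u : G) : ℕ :=
  Set.ncard {p : G × G | p.1 ∈ S ∧ p.2 ∈ S ∧ p.1 * p.2 = u}

/-- An integral monoid: a submonoid of a group satisfying Axioms I, II, III. -/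
structure IntegralMonoid {G : Type*} [Group G] (S : Submonoid G) : Prop where
  ax1 : ∀ u ∈ S, u⁻¹ ∈ S → u = 1
  ax2 : ∀ u : G, ∃ x ∈ S, ∃ y ∈ S, u = x * y⁻¹ ∧
        ∀ z ∈ S, ∀ w ∈ S, u = z * w⁻¹ → ∃ c ∈ S, z = x * c ∧ w = y * c
  ax3 : ∀ u ∈ S, {p : G × G | p.1 ∈ S ∧ p.2 ∈ S ∧ p.1 * p.2 = u}.Finite

/-- Axiom IV′ (homogeneity), in the equivalent form proved in the paper. -/
def Homogeneous {G : Type*} [Group G] (S : Submonoid G) : Prop :=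
  ∀ w u v : G, w ∈ S → u ∈ S → v ∈ S →
    (∀ d ∈ S, SDvd S d w → SDvd S d u → d = 1) →
    (∀ d ∈ S, SDvd S d w → SDvd S d v → d = 1) →
    leftSet S w ∩ leftSet S u = leftSet S w ∩ leftSet S v → u = v
namespace MoebiusAux

open Finset

variable {G : Type*} [Group G] {S : Submonoid G}

lemma sdvd_refl (a : G) : SDvd S a a := ⟨1, S.one_mem, (mul_one a).symm⟩

lemma sdvd_trans {a b c : G} (h1 : SDvd S a b) (h2 : SDvd S b c) : SDvd S a c := by
  obtain ⟨s, hs, rfl⟩ := h1; obtain ⟨t, ht, rfl⟩ := h2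
  exact ⟨s * t, S.mul_mem hs ht, (mul_assoc _ _ _)⟩

lemma sdvd_antisymm (hS : IntegralMonoid S) {a b : G} (h1 : SDvd S a b) (h2 : SDvd S b a) :
    a = b := by
  obtain ⟨s, hs, rfl⟩ := h1
  obtain ⟨t, ht, hab⟩ := h2
  have hst : s * t = 1 := by
    have : a * (s * t) = a * 1 := by rw [mul_one, ← mul_assoc, ← hab]
    exact mul_left_cancel this
  have hs1 : s = 1 := hS.ax1 s hs (by rw [inv_eq_of_mul_eq_one_right hst]; exact ht)
  rw [hs1, mul_one]

lemma one_sdvd {a : G} (ha : a ∈ S) : SDvd S 1 a := ⟨a, ha, (one_mul a).symm⟩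

lemma eq_one_of_sdvd_one (hS : IntegralMonoid S) {a : G} (ha : a ∈ S) (h : SDvd S a 1) :
    a = 1 := by
  obtain ⟨s, hs, h1⟩ := h
  exact hS.ax1 a ha (by rw [inv_eq_of_mul_eq_one_right h1.symm]; exact hs)

lemma mem_of_sdvd {a b : G} (ha : a ∈ S) (h : SDvd S a b) : b ∈ S := by
  obtain ⟨s, hs, rfl⟩ := h; exact S.mul_mem ha hs

lemma mem_leftSet_iff {u w : G} : w ∈ leftSet S u ↔ SDvd S u w := Iff.rfl

lemma self_mem_leftSet (a : G) : a ∈ leftSet S a := sdvd_refl a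

lemma leftSet_subset_iff {a b : G} : leftSet S b ⊆ leftSet S a ↔ SDvd S a b := by
  constructor
  · intro h; exact h (self_mem_leftSet b)
  · intro h x hx; exact sdvd_trans h hx

lemma leftSet_inj (hS : IntegralMonoid S) {a b : G} (h : leftSet S a = leftSet S b) : a = b :=
  sdvd_antisymm hS (leftSet_subset_iff.mp h.ge) (leftSet_subset_iff.mp h.le)

lemma leftSet_one : leftSet S (1 : G) = (S : Set G) := by
  ext x; constructor
  · rintro ⟨s, hs, rfl⟩; simpa using hs
  · intro hx; exact ⟨x, hx, (one_mul x).symm⟩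

lemma leftSet_subset_S {a : G} (ha : a ∈ S) : leftSet S a ⊆ (S : Set G) := by
  rintro x ⟨s, hs, rfl⟩; exact S.mul_mem ha hs

/-- The set of divisors of `u` in `S`. -/
def divSet (S : Submonoid G) (u : G) : Set G := {a | a ∈ S ∧ SDvd S a u}

lemma divSet_eq_image (u : G) :
    divSet S u = Prod.fst '' {p : G × G | p.1 ∈ S ∧ p.2 ∈ S ∧ p.1 * p.2 = u} := by
  ext a
  constructor
  · rintro ⟨ha, s, hs, rfl⟩; exact ⟨(a, s), ⟨ha, hs, rfl⟩, rfl⟩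
  · rintro ⟨⟨x, y⟩, ⟨hx, hy, hxy⟩, rfl⟩; exact ⟨hx, y, hy, hxy.symm⟩

lemma divSet_finite (hS : IntegralMonoid S) {u : G} (hu : u ∈ S) : (divSet S u).Finite := by
  rw [divSet_eq_image]; exact (hS.ax3 u hu).image _

/-- The finset of divisors of `u ∈ S`. -/
noncomputable def divFinset (hS : IntegralMonoid S) {u : G} (hu : u ∈ S) : Finset G :=
  (divSet_finite hS hu).toFinset

lemma mem_divFinset {hS : IntegralMonoid S} {u a : G} {hu : u ∈ S} :
    a ∈ divFinset hS hu ↔ a ∈ S ∧ SDvd S a u := Set.Finite.mem_toFinset _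

lemma one_mem_divFinset {hS : IntegralMonoid S} {u : G} {hu : u ∈ S} :
    (1 : G) ∈ divFinset hS hu := mem_divFinset.mpr ⟨S.one_mem, one_sdvd hu⟩

lemma self_mem_divFinset {hS : IntegralMonoid S} {u : G} {hu : u ∈ S} :
    u ∈ divFinset hS hu := mem_divFinset.mpr ⟨hu, sdvd_refl u⟩

lemma divFinset_ssubset (hS : IntegralMonoid S) {m u : G} (hm : m ∈ S) (hu : u ∈ S)
    (h : SDvd S m u) (hne : m ≠ u) : divFinset hS hm ⊂ divFinset hS hu := by
  constructor
  · intro a haa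
    obtain ⟨haS, had⟩ := mem_divFinset.mp haa
    exact mem_divFinset.mpr ⟨haS, sdvd_trans had h⟩
  · intro hsub
    have hu' : u ∈ divFinset hS hm := hsub self_mem_divFinset
    exact hne (sdvd_antisymm hS h (mem_divFinset.mp hu').2)

lemma divFinset_card_lt (hS : IntegralMonoid S) {m u : G} (hm : m ∈ S) (hu : u ∈ S)
    (h : SDvd S m u) (hne : m ≠ u) : (divFinset hS hm).card < (divFinset hS hu).card :=
  Finset.card_lt_card (divFinset_ssubset hS hm hu h hne)

end MoebiusAux
namespace MoebiusAux

variable {G : Type*} [Group G] {S : Submonoid G}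

open scoped Classical

lemma divisorSum (hS : IntegralMonoid S) (μ : G → ℤ)
    (hμ : ∀ z ∈ S,
      (∑ᶠ p ∈ {p : G × G | p.1 ∈ S ∧ p.2 ∈ S ∧ p.1 * p.2 = z}, μ p.1)
        = (if z = 1 then 1 else 0))
    {u : G} (hu : u ∈ S) :
    ∑ a ∈ divFinset hS hu, μ a = if u = 1 then 1 else 0 := by
  have h := hμ u hu
  rw [← Set.Finite.coe_toFinset (hS.ax3 u hu), finsum_mem_coe_finset] at h
  rw [← h]
  refine Finset.sum_bij' (fun a _ => ((a, a⁻¹ * u) : G × G)) (fun p _ => p.1) ?_ ?_ ?_ ?_ ?_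
  · intro a ha
    obtain ⟨haS, s, hs, hsu⟩ := mem_divFinset.mp ha
    have h2 : a⁻¹ * u = s := by rw [hsu, ← mul_assoc, inv_mul_cancel, one_mul]
    refine (Set.Finite.mem_toFinset _).mpr ?_
    show a ∈ S ∧ a⁻¹ * u ∈ S ∧ a * (a⁻¹ * u) = u
    exact ⟨haS, by rw [h2]; exact hs, by group⟩
  · intro p hp
    obtain ⟨h1, h2, h3⟩ := (Set.Finite.mem_toFinset _).mp hp
    exact mem_divFinset.mpr ⟨h1, p.2, h2, h3.symm⟩
  · intro a ha; rfl
  · intro p hp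
    obtain ⟨h1, h2, h3⟩ := (Set.Finite.mem_toFinset _).mp hp
    have h4 : p.1⁻¹ * u = p.2 := by rw [← h3, ← mul_assoc, inv_mul_cancel, one_mul]
    show (p.1, p.1⁻¹ * u) = p
    rw [h4]
  · intro a ha; rfl

lemma divFinset_one (hS : IntegralMonoid S) :
    divFinset hS S.one_mem = ({1} : Finset G) := by
  ext a
  rw [mem_divFinset, Finset.mem_singleton]
  constructor
  · rintro ⟨haS, hd⟩; exact eq_one_of_sdvd_one hS haS hd
  · rintro rfl; exact ⟨S.one_mem, sdvd_refl 1⟩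

lemma mu_one (hS : IntegralMonoid S) (μ : G → ℤ)
    (hμ : ∀ z ∈ S,
      (∑ᶠ p ∈ {p : G × G | p.1 ∈ S ∧ p.2 ∈ S ∧ p.1 * p.2 = z}, μ p.1)
        = (if z = 1 then 1 else 0)) :
    μ 1 = 1 := by
  have h := divisorSum hS μ hμ S.one_mem
  rwa [divFinset_one hS, Finset.sum_singleton, if_pos rfl] at h

/-- Irreducibility. -/
def Irr (S : Submonoid G) (p : G) : Prop :=
  p ∈ S ∧ p ≠ 1 ∧ ∀ d ∈ S, SDvd S d p → d = 1 ∨ d = p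

lemma tau_eq_card (hS : IntegralMonoid S) {u : G} (hu : u ∈ S) :
    tau S u = (divFinset hS hu).card := by
  have hinj : Set.InjOn Prod.fst {p : G × G | p.1 ∈ S ∧ p.2 ∈ S ∧ p.1 * p.2 = u} := by
    rintro ⟨a, b⟩ ⟨ha, hb, hab⟩ ⟨a', b'⟩ ⟨ha', hb', hab'⟩ h
    simp only at h
    subst h
    have : b = b' := mul_left_cancel (hab.trans hab'.symm)
    simp [this]
  have h1 : (divSet S u).ncard = tau S u := by
    rw [divSet_eq_image, tau, Set.ncard_image_of_injOn hinj]
  rw [← h1, divFinset, Set.ncard_eq_toFinset_card _ (divSet_finite hS hu)]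

lemma irr_iff_tau (hS : IntegralMonoid S) {u : G} (hu : u ∈ S) :
    Irr S u ↔ tau S u = 2 := by
  rw [tau_eq_card hS hu]
  constructor
  · rintro ⟨_, hu1, hirr⟩
    have : divFinset hS hu = {1, u} := by
      ext a
      rw [mem_divFinset]
      simp only [Finset.mem_insert, Finset.mem_singleton]
      constructor
      · rintro ⟨haS, hd⟩; exact hirr a haS hd
      · rintro (rfl | rfl)
        · exact ⟨S.one_mem, one_sdvd hu⟩
        · exact ⟨hu, sdvd_refl _⟩
    rw [this, Finset.card_insert_of_notMem (fun h => hu1 (Finset.mem_singleton.mp h).symm),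
      Finset.card_singleton]
  · intro hcard
    have hu1 : u ≠ 1 := by
      rintro rfl
      rw [divFinset_one hS, Finset.card_singleton] at hcard
      omega
    have hsub : ({1, u} : Finset G) ⊆ divFinset hS hu := by
      intro a ha
      simp only [Finset.mem_insert, Finset.mem_singleton] at ha
      rcases ha with rfl | rfl
      · exact one_mem_divFinset
      · exact self_mem_divFinset
    have hcard2 : ({1, u} : Finset G).card = 2 := by
      rw [Finset.card_insert_of_notMem (fun h => hu1 (Finset.mem_singleton.mp h).symm),
        Finset.card_singleton]
    have heq : divFinset hS hu = ({1, u} : Finset G) :=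
      (Finset.eq_of_subset_of_card_le hsub (by omega)).symm
    refine ⟨hu, hu1, fun d hd hdvd => ?_⟩
    have : d ∈ ({1, u} : Finset G) := heq ▸ mem_divFinset.mpr ⟨hd, hdvd⟩
    simpa using this

lemma exists_irr_dvd_aux (hS : IntegralMonoid S) :
    ∀ n : ℕ, ∀ u : G, ∀ hu : u ∈ S, u ≠ 1 → (divFinset hS hu).card ≤ n →
      ∃ p, Irr S p ∧ SDvd S p u := by
  intro n
  induction n with
  | zero =>
    intro u hu _ hcard
    have h1 : 0 < (divFinset hS hu).card :=
      Finset.card_pos.mpr ⟨1, one_mem_divFinset⟩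
    omega
  | succ n IH =>
    intro u hu hu1 hcard
    by_cases hirr : Irr S u
    · exact ⟨u, hirr, sdvd_refl u⟩
    · have : ∃ d, d ∈ S ∧ SDvd S d u ∧ d ≠ 1 ∧ d ≠ u := by
        by_contra hcon
        push_neg at hcon
        refine hirr ⟨hu, hu1, fun d hd hdvd => ?_⟩
        by_contra hd'
        push_neg at hd'
        exact hd'.2 (hcon d hd hdvd hd'.1)
      obtain ⟨d, hdS, hdu, hd1, hdu'⟩ := this
      have hlt := divFinset_card_lt hS hdS hu hdu hdu'
      obtain ⟨p, hp, hpd⟩ := IH d hdS hd1 (by omega)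
      exact ⟨p, hp, sdvd_trans hpd hdu⟩

lemma exists_irr_dvd (hS : IntegralMonoid S) {u : G} (hu : u ∈ S) (hu1 : u ≠ 1) :
    ∃ p, Irr S p ∧ SDvd S p u :=
  exists_irr_dvd_aux hS _ u hu hu1 le_rfl

lemma exists_lcm (hS : IntegralMonoid S) {a b : G} (ha : a ∈ S) (hb : b ∈ S) :
    ∃ m, m ∈ S ∧ leftSet S m = leftSet S a ∩ leftSet S b := by
  obtain ⟨x, hx, y, hy, hxy, huniv⟩ := hS.ax2 (a⁻¹ * b)
  have hby : a * x = b * y := by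
    have hb' : b = a * (x * y⁻¹) := by
      rw [← hxy, ← mul_assoc, mul_inv_cancel, one_mul]
    rw [hb', mul_assoc, mul_assoc, inv_mul_cancel, mul_one]
  refine ⟨a * x, S.mul_mem ha hx, ?_⟩
  ext t
  constructor
  · rintro ⟨s, hs, rfl⟩
    exact ⟨⟨x * s, S.mul_mem hx hs, mul_assoc _ _ _⟩,
      ⟨y * s, S.mul_mem hy hs, by rw [← mul_assoc, ← hby, mul_assoc]⟩⟩
  · rintro ⟨⟨z, hz, rfl⟩, ⟨w, hw, hw'⟩⟩
    have hzw : a⁻¹ * b = z * w⁻¹ := by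
      have hb2 : b = a * z * w⁻¹ := by rw [hw', mul_assoc, mul_inv_cancel, mul_one]
      rw [hb2, ← mul_assoc, ← mul_assoc, inv_mul_cancel, one_mul]
    obtain ⟨c, hc, hzc, _⟩ := huniv z hz w hw hzw
    exact ⟨c, hc, by rw [hzc, ← mul_assoc]⟩

/-- Right lcm of `a` and `b` in `S` (junk value `1` if `a ∉ S` or `b ∉ S`). -/
noncomputable def slcm (hS : IntegralMonoid S) (a b : G) : G :=
  if h : a ∈ S ∧ b ∈ S then (exists_lcm hS h.1 h.2).choose else 1

lemma slcm_mem (hS : IntegralMonoid S) {a b : G} (ha : a ∈ S) (hb : b ∈ S) :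
    slcm hS a b ∈ S := by
  rw [slcm, dif_pos (⟨ha, hb⟩ : a ∈ S ∧ b ∈ S)]
  exact (exists_lcm hS ha hb).choose_spec.1

lemma leftSet_slcm (hS : IntegralMonoid S) {a b : G} (ha : a ∈ S) (hb : b ∈ S) :
    leftSet S (slcm hS a b) = leftSet S a ∩ leftSet S b := by
  rw [slcm, dif_pos (⟨ha, hb⟩ : a ∈ S ∧ b ∈ S)]
  exact (exists_lcm hS ha hb).choose_spec.2

lemma sdvd_slcm_left (hS : IntegralMonoid S) {a b : G} (ha : a ∈ S) (hb : b ∈ S) :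
    SDvd S a (slcm hS a b) := by
  have h := self_mem_leftSet (S := S) (slcm hS a b)
  rw [leftSet_slcm hS ha hb] at h
  exact h.1

lemma sdvd_slcm_right (hS : IntegralMonoid S) {a b : G} (ha : a ∈ S) (hb : b ∈ S) :
    SDvd S b (slcm hS a b) := by
  have h := self_mem_leftSet (S := S) (slcm hS a b)
  rw [leftSet_slcm hS ha hb] at h
  exact h.2

lemma slcm_eq (hS : IntegralMonoid S) {a b m : G} (ha : a ∈ S) (hb : b ∈ S)
    (h : leftSet S m = leftSet S a ∩ leftSet S b) : m = slcm hS a b :=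
  leftSet_inj hS (h.trans (leftSet_slcm hS ha hb).symm)

end MoebiusAux
namespace MoebiusAux

variable {G : Type*} [Group G] {S : Submonoid G}

open scoped Classical

/-- Coprimality: the only common divisor in `S` is 1. -/
def Cop (S : Submonoid G) (a b : G) : Prop :=
  ∀ d ∈ S, SDvd S d a → SDvd S d b → d = 1

lemma cop_symm {a b : G} (h : Cop S a b) : Cop S b a :=
  fun d hd h1 h2 => h d hd h2 h1

lemma cop_of_irr_ne {a b : G} (ha : Irr S a) (hb : Irr S b) (hab : a ≠ b) : Cop S a b := by
  intro d hd hda hdb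
  rcases ha.2.2 d hd hda with rfl | rfl
  · rfl
  · rcases hb.2.2 d hd hdb with h | h
    · exact h
    · exact absurd h hab

lemma cop_one_right {a : G} (hS : IntegralMonoid S) : Cop S a 1 :=
  fun d hd _ hd1 => eq_one_of_sdvd_one hS hd hd1

lemma irr_sdvd_irr {p q : G} (hp : Irr S p) (hq : Irr S q) (h : SDvd S p q) : p = q := by
  rcases hq.2.2 p hp.1 h with h1 | h1
  · exact absurd h1 hp.2.1
  · exact h1

/-- Three pairwise distinct irreducibles: `s` does not divide `lcm(q, r)`. -/
lemma P3 (hS : IntegralMonoid S) (hhom : Homogeneous S) {s q r : G}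
    (hs : Irr S s) (hq : Irr S q) (hr : Irr S r)
    (hsq : s ≠ q) (hsr : s ≠ r) (hqr : q ≠ r) :
    ¬ SDvd S s (slcm hS q r) := by
  intro hdvd
  have hts : leftSet S (slcm hS q r) ⊆ leftSet S s := leftSet_subset_iff.mpr hdvd
  rw [leftSet_slcm hS hq.1 hr.1] at hts
  by_cases hc : Cop S q (slcm hS r s)
  · have hkey : leftSet S q ∩ leftSet S (slcm hS r s) = leftSet S q ∩ leftSet S r := by
      rw [leftSet_slcm hS hr.1 hs.1]
      apply Set.Subset.antisymm
      · intro x hx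
        exact ⟨hx.1, hx.2.1⟩
      · intro x hx
        exact ⟨hx.1, hx.2, hts hx⟩
    have heq := hhom q r (slcm hS r s) hq.1 hr.1 (slcm_mem hS hr.1 hs.1)
      (cop_of_irr_ne hq hr hqr) hc hkey.symm
    -- r = slcm r s, so s ∣ r
    have hsr' : SDvd S s r := heq ▸ sdvd_slcm_right hS hr.1 hs.1
    exact hsr (irr_sdvd_irr hs hr hsr')
  · rw [Cop] at hc
    push_neg at hc
    obtain ⟨d, hd, hdq, hdt, hd1⟩ := hc
    have hdq' : d = q := by
      rcases hq.2.2 d hd hdq with h | h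
      · exact absurd h hd1
      · exact h
    subst hdq'
    -- q ∣ slcm r s
    have hqrs : leftSet S (slcm hS r s) ⊆ leftSet S d := leftSet_subset_iff.mpr hdt
    rw [leftSet_slcm hS hr.1 hs.1] at hqrs
    have hAB : leftSet S r ∩ leftSet S s = leftSet S r ∩ leftSet S d := by
      apply Set.Subset.antisymm
      · intro x hx
        exact ⟨hx.1, hqrs hx⟩
      · intro x hx
        exact ⟨hx.1, hts ⟨hx.2, hx.1⟩⟩
    have := hhom r s d hr.1 hs.1 hd (cop_of_irr_ne hr hs (Ne.symm hsr))
      (cop_of_irr_ne hr hq (Ne.symm hqr)) hAB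
    exact hsq this

lemma P2 (hS : IntegralMonoid S) (hhom : Homogeneous S) {b q r : G}
    (hb : b ∈ S) (hq : Irr S q) (hr : Irr S r) (hcop : Cop S b q)
    (hrq : r ≠ q) (hrb : ¬ SDvd S r b) :
    ¬ SDvd S r (slcm hS b q) := by
  intro hdvd
  have hms : leftSet S (slcm hS b q) ⊆ leftSet S r := leftSet_subset_iff.mpr hdvd
  rw [leftSet_slcm hS hb hq.1] at hms
  by_cases hc : Cop S b (slcm hS q r)
  · have hkey : leftSet S b ∩ leftSet S q = leftSet S b ∩ leftSet S (slcm hS q r) := by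
      rw [leftSet_slcm hS hq.1 hr.1]
      apply Set.Subset.antisymm
      · intro x hx
        exact ⟨hx.1, hx.2, hms hx⟩
      · intro x hx
        exact ⟨hx.1, hx.2.1⟩
    have heq := hhom b q (slcm hS q r) hb hq.1 (slcm_mem hS hq.1 hr.1) hcop hc hkey
    have : SDvd S r q := heq ▸ sdvd_slcm_right hS hq.1 hr.1
    exact hrq (irr_sdvd_irr hr hq this)
  · rw [Cop] at hc
    push_neg at hc
    obtain ⟨d, hd, hdb, hdt, hd1⟩ := hc
    obtain ⟨s', hs', hs'd⟩ := exists_irr_dvd hS hd hd1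
    have hs'b : SDvd S s' b := sdvd_trans hs'd hdb
    have hs't : SDvd S s' (slcm hS q r) := sdvd_trans hs'd hdt
    have hs'q : s' ≠ q := by
      rintro rfl
      exact hs'.2.1 (hcop s' hs'.1 hs'b (sdvd_refl _))
    have hs'r : s' ≠ r := by
      rintro rfl
      exact hrb hs'b
    exact P3 hS hhom hs' hq hr hs'q hs'r (Ne.symm hrq) hs't

/-- The prime property: an irreducible dividing an lcm of coprime elements divides one of them. -/
lemma Pstar (hS : IntegralMonoid S) (hhom : Homogeneous S) {a b q : G}
    (ha : a ∈ S) (hb : b ∈ S) (hq : Irr S q) (hcop : Cop S a b)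
    (h : SDvd S q (slcm hS a b)) :
    SDvd S q a ∨ SDvd S q b := by
  by_contra hn
  push_neg at hn
  obtain ⟨hqa, hqb⟩ := hn
  have hms : leftSet S (slcm hS a b) ⊆ leftSet S q := leftSet_subset_iff.mpr h
  rw [leftSet_slcm hS ha hb] at hms
  by_cases hc : Cop S a (slcm hS b q)
  · have hkey : leftSet S a ∩ leftSet S b = leftSet S a ∩ leftSet S (slcm hS b q) := by
      rw [leftSet_slcm hS hb hq.1]
      apply Set.Subset.antisymm
      · intro x hx
        exact ⟨hx.1, hx.2, hms hx⟩
      · intro x hx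
        exact ⟨hx.1, hx.2.1⟩
    have heq := hhom a b (slcm hS b q) ha hb (slcm_mem hS hb hq.1) hcop hc hkey
    exact hqb (heq ▸ sdvd_slcm_right hS hb hq.1)
  · rw [Cop] at hc
    push_neg at hc
    obtain ⟨d, hd, hda, hdt, hd1⟩ := hc
    obtain ⟨r, hrirr, hrd⟩ := exists_irr_dvd hS hd hd1
    have hra : SDvd S r a := sdvd_trans hrd hda
    have hrt : SDvd S r (slcm hS b q) := sdvd_trans hrd hdt
    have hcbq : Cop S b q := by
      intro d' hd' hd'b hd'q
      rcases hq.2.2 d' hd' hd'q with h' | h'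
      · exact h'
      · exact absurd (h' ▸ hd'b) hqb
    have hrq : r ≠ q := by
      rintro rfl
      exact hqa hra
    have hrb : ¬ SDvd S r b := by
      intro hrb'
      exact hrirr.2.1 (hcop r hrirr.1 hra hrb')
    exact P2 hS hhom hb hq hrirr hcbq hrq hrb hrt

/-- `m` is the right lcm of the finite set `Q` of elements of `S`. -/
def IsLcmOf (S : Submonoid G) (m : G) (Q : Finset G) : Prop :=
  m ∈ S ∧ leftSet S m = (S : Set G) ∩ ⋂ x ∈ Q, leftSet S x

lemma isLcmOf_unique (hS : IntegralMonoid S) {m m' : G} {Q : Finset G}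
    (h : IsLcmOf S m Q) (h' : IsLcmOf S m' Q) : m = m' :=
  leftSet_inj hS (h.2.trans h'.2.symm)

lemma isLcmOf_one_empty : IsLcmOf S (1 : G) (∅ : Finset G) := by
  refine ⟨S.one_mem, ?_⟩
  simp [leftSet_one]

lemma exists_isLcmOf (hS : IntegralMonoid S) (Q : Finset G) (hQ : ∀ x ∈ Q, x ∈ S) :
    ∃ m, IsLcmOf S m Q := by
  induction Q using Finset.induction_on with
  | empty => exact ⟨1, isLcmOf_one_empty⟩
  | @insert a Q ha IH =>
    obtain ⟨m', hm'⟩ := IH (fun x hx => hQ x (Finset.mem_insert_of_mem hx))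
    have haS : a ∈ S := hQ a (Finset.mem_insert_self a Q)
    refine ⟨slcm hS a m', slcm_mem hS haS hm'.1, ?_⟩
    rw [leftSet_slcm hS haS hm'.1, hm'.2, Finset.set_biInter_insert]
    rw [Set.inter_left_comm]

lemma isLcm_mem_sdvd {m x : G} {Q : Finset G} (h : IsLcmOf S m Q) (hx : x ∈ Q) :
    SDvd S x m := by
  have hm : m ∈ leftSet S m := self_mem_leftSet m
  rw [h.2] at hm
  have := hm.2
  rw [Set.mem_iInter₂] at this
  exact this x hx

/-- Every irreducible dividing an lcm of distinct irreducibles is one of them. -/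
lemma mem_of_irr_sdvd_lcm (hS : IntegralMonoid S) (hhom : Homogeneous S) :
    ∀ Q : Finset G, (∀ x ∈ Q, Irr S x) → ∀ m, IsLcmOf S m Q →
      ∀ p, Irr S p → SDvd S p m → p ∈ Q := by
  intro Q
  induction Q using Finset.induction_on with
  | empty =>
    intro _ m hm p hp hpm
    have hm1 : m = 1 := by
      refine leftSet_inj hS ?_
      rw [hm.2, leftSet_one]
      simp
    exact absurd (eq_one_of_sdvd_one hS hp.1 (hm1 ▸ hpm)) hp.2.1
  | @insert a Q ha IH =>
    intro hQirr m hm p hp hpm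
    have haIrr : Irr S a := hQirr a (Finset.mem_insert_self a Q)
    have hQirr' : ∀ x ∈ Q, Irr S x := fun x hx => hQirr x (Finset.mem_insert_of_mem hx)
    obtain ⟨m', hm'⟩ := exists_isLcmOf hS Q (fun x hx => (hQirr' x hx).1)
    have hCop : Cop S a m' := by
      intro d hd hda hdm'
      rcases haIrr.2.2 d hd hda with h1 | h1
      · exact h1
      · subst h1
        exact absurd (IH hQirr' m' hm' d haIrr hdm') ha
    have hmeq : m = slcm hS a m' := by
      apply slcm_eq hS haIrr.1 hm'.1
      rw [hm.2, hm'.2, Finset.set_biInter_insert, Set.inter_left_comm]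
    rw [hmeq] at hpm
    rcases Pstar hS hhom haIrr.1 hm'.1 hp hCop hpm with h1 | h1
    · exact Finset.mem_insert.mpr (Or.inl (irr_sdvd_irr hp haIrr h1))
    · exact Finset.mem_insert.mpr (Or.inr (IH hQirr' m' hm' p hp h1))

end MoebiusAux
namespace MoebiusAux

variable {G : Type*} [Group G] {S : Submonoid G}

open scoped Classical

lemma weisner (hS : IntegralMonoid S) (μ : G → ℤ)
    (hμ : ∀ z ∈ S,
      (∑ᶠ p ∈ {p : G × G | p.1 ∈ S ∧ p.2 ∈ S ∧ p.1 * p.2 = z}, μ p.1)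
        = (if z = 1 then 1 else 0))
    {p : G} (hp : Irr S p) :
    ∀ n : ℕ, ∀ u : G, ∀ hu : u ∈ S, SDvd S p u → (divFinset hS hu).card ≤ n →
      ∑ a ∈ (divFinset hS hu).filter
        (fun a => leftSet S a ∩ leftSet S p = leftSet S u), μ a = 0 := by
  intro n
  induction n with
  | zero =>
    intro u hu _ hcard
    have h1 : 0 < (divFinset hS hu).card :=
      Finset.card_pos.mpr ⟨1, one_mem_divFinset⟩
    omega
  | succ n IH =>
    intro u hu hpu hcard
    have hu1 : u ≠ 1 := fun h => hp.2.1 (eq_one_of_sdvd_one hS hp.1 (h ▸ hpu))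
    have hsum0 : ∑ a ∈ divFinset hS hu, μ a = 0 := by
      rw [divisorSum hS μ hμ hu, if_neg hu1]
    have hmaps : ∀ a ∈ divFinset hS hu,
        slcm hS a p ∈ (divFinset hS hu).filter (fun m => SDvd S p m) := by
      intro a ha
      obtain ⟨haS, hau⟩ := mem_divFinset.mp ha
      have hmem : u ∈ leftSet S (slcm hS a p) := by
        rw [leftSet_slcm hS haS hp.1]; exact ⟨hau, hpu⟩
      exact Finset.mem_filter.mpr
        ⟨mem_divFinset.mpr ⟨slcm_mem hS haS hp.1, mem_leftSet_iff.mp hmem⟩,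
          sdvd_slcm_right hS haS hp.1⟩
    have hfib := Finset.sum_fiberwise_of_maps_to hmaps μ
    rw [hsum0] at hfib
    have humem : u ∈ (divFinset hS hu).filter (fun m => SDvd S p m) :=
      Finset.mem_filter.mpr ⟨self_mem_divFinset, hpu⟩
    rw [← Finset.add_sum_erase _ _ humem] at hfib
    have hzero : ∀ m ∈ ((divFinset hS hu).filter (fun m => SDvd S p m)).erase u,
        ∑ a ∈ (divFinset hS hu).filter (fun a => slcm hS a p = m), μ a = 0 := by
      intro m hm
      have hmne := Finset.ne_of_mem_erase hm
      have hm' := Finset.mem_of_mem_erase hm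
      obtain ⟨hmdiv, hpm⟩ := Finset.mem_filter.mp hm'
      obtain ⟨hmS, hmu⟩ := mem_divFinset.mp hmdiv
      have hcardm : (divFinset hS hmS).card ≤ n := by
        have := divFinset_card_lt hS hmS hu hmu hmne
        omega
      have hWm := IH m hmS hpm hcardm
      rw [← hWm]
      apply Finset.sum_congr ?_ (fun _ _ => rfl)
      ext a
      simp only [Finset.mem_filter, mem_divFinset]
      constructor
      · rintro ⟨⟨haS, hau⟩, heq⟩
        exact ⟨⟨haS, heq ▸ sdvd_slcm_left hS haS hp.1⟩,
          (leftSet_slcm hS haS hp.1).symm.trans (congrArg (leftSet S) heq)⟩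
      · rintro ⟨⟨haS, ham⟩, heq⟩
        exact ⟨⟨haS, sdvd_trans ham hmu⟩, (slcm_eq hS haS hp.1 heq.symm).symm⟩
    rw [Finset.sum_eq_zero hzero, add_zero] at hfib
    have hfibu : (divFinset hS hu).filter (fun a => slcm hS a p = u) =
        (divFinset hS hu).filter (fun a => leftSet S a ∩ leftSet S p = leftSet S u) := by
      ext a
      simp only [Finset.mem_filter, mem_divFinset]
      constructor
      · rintro ⟨⟨haS, hau⟩, heq⟩
        exact ⟨⟨haS, hau⟩,
          (leftSet_slcm hS haS hp.1).symm.trans (congrArg (leftSet S) heq)⟩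
      · rintro ⟨⟨haS, hau⟩, heq⟩
        exact ⟨⟨haS, hau⟩, (slcm_eq hS haS hp.1 heq.symm).symm⟩
    rw [hfibu] at hfib
    exact hfib

lemma recursion (hS : IntegralMonoid S) (hhom : Homogeneous S) (μ : G → ℤ)
    (hμ : ∀ z ∈ S,
      (∑ᶠ p ∈ {p : G × G | p.1 ∈ S ∧ p.2 ∈ S ∧ p.1 * p.2 = z}, μ p.1)
        = (if z = 1 then 1 else 0))
    {u p : G} (hu : u ∈ S) (hp : Irr S p) (hpu : SDvd S p u) :
    (∀ a₀, a₀ ∈ S → Cop S p a₀ → leftSet S a₀ ∩ leftSet S p = leftSet S u →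
      μ u = -μ a₀) ∧
    ((¬ ∃ a₀, a₀ ∈ S ∧ Cop S p a₀ ∧ leftSet S a₀ ∩ leftSet S p = leftSet S u) →
      μ u = 0) := by
  have hW := weisner hS μ hμ hp _ u hu hpu le_rfl
  set F := (divFinset hS hu).filter
    (fun a => leftSet S a ∩ leftSet S p = leftSet S u) with hFdef
  have humem : u ∈ F := Finset.mem_filter.mpr
    ⟨self_mem_divFinset, Set.inter_eq_left.mpr (leftSet_subset_iff.mpr hpu)⟩
  have hkey : ∀ a ∈ F, a ≠ u → Cop S p a := by
    intro a haF hane d hd hdp hda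
    rcases hp.2.2 d hd hdp with h1 | h1
    · exact h1
    · exfalso
      subst h1
      obtain ⟨hadiv, haeq⟩ := Finset.mem_filter.mp haF
      have h2 : leftSet S a ⊆ leftSet S d := leftSet_subset_iff.mpr hda
      have h3 : leftSet S a = leftSet S u := by
        rw [← haeq]; exact (Set.inter_eq_left.mpr h2).symm
      exact hane (leftSet_inj hS h3)
  constructor
  · intro a₀ ha₀S hcop hset
    have hu_in : u ∈ leftSet S a₀ ∩ leftSet S p := hset ▸ self_mem_leftSet u
    have ha₀F : a₀ ∈ F := Finset.mem_filter.mpr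
      ⟨mem_divFinset.mpr ⟨ha₀S, mem_leftSet_iff.mp hu_in.1⟩, hset⟩
    have ha₀ne : a₀ ≠ u := by
      rintro rfl
      exact hp.2.1 (hcop p hp.1 (sdvd_refl p) hpu)
    have hF : F = {u, a₀} := by
      apply Finset.Subset.antisymm
      · intro a haF
        by_cases hau : a = u
        · simp [hau]
        · have hcopa := hkey a haF hau
          obtain ⟨hadiv, haeq⟩ := Finset.mem_filter.mp haF
          have haS := (mem_divFinset.mp hadiv).1
          have e1 : leftSet S p ∩ leftSet S a = leftSet S u := by
            rw [Set.inter_comm]; exact haeq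
          have e2 : leftSet S p ∩ leftSet S a₀ = leftSet S u := by
            rw [Set.inter_comm]; exact hset
          have : a = a₀ := hhom p a a₀ hp.1 haS ha₀S hcopa hcop (e1.trans e2.symm)
          simp [this]
      · intro a ha
        simp only [Finset.mem_insert, Finset.mem_singleton] at ha
        rcases ha with rfl | rfl
        · exact humem
        · exact ha₀F
    rw [hF, Finset.sum_pair (Ne.symm ha₀ne)] at hW
    linarith
  · intro hno
    have hF : F = {u} := by
      apply Finset.Subset.antisymm
      · intro a haF
        by_cases hau : a = u
        · simp [hau]
        · exfalso
          have hcopa := hkey a haF hau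
          obtain ⟨hadiv, haeq⟩ := Finset.mem_filter.mp haF
          exact hno ⟨a, (mem_divFinset.mp hadiv).1, hcopa, haeq⟩
      · intro a ha
        rw [Finset.mem_singleton] at ha
        rw [ha]
        exact humem
    rw [hF, Finset.sum_singleton] at hW
    exact hW

lemma witness_of_rep (hS : IntegralMonoid S) (hhom : Homogeneous S) {u p : G}
    (hp : Irr S p) {Q : Finset G}
    (hQirr : ∀ x ∈ Q, Irr S x) (hQlcm : IsLcmOf S u Q) (hpQ : p ∈ Q) :
    ∃ m', m' ∈ S ∧ Cop S p m' ∧ leftSet S m' ∩ leftSet S p = leftSet S u ∧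
      IsLcmOf S m' (Q.erase p) := by
  obtain ⟨m', hm'⟩ := exists_isLcmOf hS (Q.erase p)
    (fun x hx => (hQirr x (Finset.mem_of_mem_erase hx)).1)
  have hCop : Cop S p m' := by
    intro d hd hdp hdm'
    rcases hp.2.2 d hd hdp with h1 | h1
    · exact h1
    · subst h1
      exact absurd
        (mem_of_irr_sdvd_lcm hS hhom _
          (fun x hx => hQirr x (Finset.mem_of_mem_erase hx)) m' hm' d hp hdm')
        (Finset.notMem_erase d Q)
  refine ⟨m', hm'.1, hCop, ?_, hm'⟩
  rw [hm'.2, hQlcm.2]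
  conv_rhs => rw [← Finset.insert_erase hpQ]
  rw [Finset.set_biInter_insert, Set.inter_assoc, Set.inter_comm _ (leftSet S p)]

end MoebiusAux
namespace MoebiusAux

variable {G : Type*} [Group G] {S : Submonoid G}

open scoped Classical

lemma main_induction (hS : IntegralMonoid S) (hhom : Homogeneous S) (μ : G → ℤ)
    (hμ : ∀ z ∈ S,
      (∑ᶠ p ∈ {p : G × G | p.1 ∈ S ∧ p.2 ∈ S ∧ p.1 * p.2 = z}, μ p.1)
        = (if z = 1 then 1 else 0)) :
    ∀ n : ℕ, ∀ u : G, ∀ hu : u ∈ S, (divFinset hS hu).card ≤ n →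
      (∀ Q : Finset G, Q.Nonempty → (∀ x ∈ Q, Irr S x) → IsLcmOf S u Q →
        μ u = (-1) ^ Q.card) ∧
      (u ≠ 1 → (¬ ∃ Q : Finset G, Q.Nonempty ∧ (∀ x ∈ Q, Irr S x) ∧ IsLcmOf S u Q) →
        μ u = 0) := by
  intro n
  induction n with
  | zero =>
    intro u hu hcard
    have h1 : 0 < (divFinset hS hu).card :=
      Finset.card_pos.mpr ⟨1, one_mem_divFinset⟩
    omega
  | succ n IH =>
    intro u hu hcard
    by_cases hu1 : u = 1
    · subst hu1
      constructor
      · intro Q hQne hQirr hQlcm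
        exfalso
        obtain ⟨x, hx⟩ := hQne
        exact (hQirr x hx).2.1
          (eq_one_of_sdvd_one hS (hQirr x hx).1 (isLcm_mem_sdvd hQlcm hx))
      · intro h1 _
        exact absurd rfl h1
    · obtain ⟨p, hp, hpu⟩ := exists_irr_dvd hS hu hu1
      have hrec := recursion hS hhom μ hμ hu hp hpu
      by_cases hC : ∃ a₀, a₀ ∈ S ∧ Cop S p a₀ ∧
          leftSet S a₀ ∩ leftSet S p = leftSet S u
      · obtain ⟨a₀, ha₀S, hcop, hset⟩ := hC
        have hu_in : u ∈ leftSet S a₀ ∩ leftSet S p := hset ▸ self_mem_leftSet u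
        have ha₀u : SDvd S a₀ u := mem_leftSet_iff.mp hu_in.1
        have hμu : μ u = -μ a₀ := hrec.1 a₀ ha₀S hcop hset
        have ha₀ne : a₀ ≠ u := by
          rintro rfl
          exact hp.2.1 (hcop p hp.1 (sdvd_refl p) hpu)
        have hcard' : (divFinset hS ha₀S).card ≤ n := by
          have := divFinset_card_lt hS ha₀S hu ha₀u ha₀ne
          omega
        by_cases ha1 : a₀ = 1
        · -- u = p
          subst ha1
          have hup : u = p := by
            apply leftSet_inj hS
            rw [← hset, leftSet_one, Set.inter_eq_right.mpr (leftSet_subset_S hp.1)]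
          have hQp : IsLcmOf S u {p} := by
            refine ⟨hu, ?_⟩
            rw [Finset.set_biInter_singleton,
              Set.inter_eq_right.mpr (leftSet_subset_S hp.1), hup]
          have hμval : μ u = -1 := by
            rw [hμu, mu_one hS μ hμ]
          constructor
          · intro Q hQne hQirr hQlcm
            have hQeq : Q = {p} := by
              apply Finset.Subset.antisymm
              · intro x hx
                have hxu : SDvd S x u := isLcm_mem_sdvd hQlcm hx
                rw [hup] at hxu
                rw [Finset.mem_singleton]
                exact irr_sdvd_irr (hQirr x hx) hp hxu
              · intro x hx
                rw [Finset.mem_singleton] at hx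
                rw [hx]
                obtain ⟨y, hy⟩ := hQne
                have hyu : SDvd S y u := isLcm_mem_sdvd hQlcm hy
                rw [hup] at hyu
                have : y = p := irr_sdvd_irr (hQirr y hy) hp hyu
                exact this ▸ hy
            rw [hQeq, Finset.card_singleton, pow_one, hμval]
          · intro _ hno
            refine absurd ⟨{p}, Finset.singleton_nonempty p, ?_, hQp⟩ hno
            intro x hx
            rw [Finset.mem_singleton.mp hx]
            exact hp
        · -- a₀ ≠ 1
          have IHa := IH a₀ ha₀S hcard'
          by_cases hEx : ∃ Q₀ : Finset G, Q₀.Nonempty ∧ (∀ x ∈ Q₀, Irr S x) ∧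
              IsLcmOf S a₀ Q₀
          · obtain ⟨Q₀, hQ₀ne, hQ₀irr, hQ₀lcm⟩ := hEx
            have hμa₀ : μ a₀ = (-1) ^ Q₀.card := IHa.1 Q₀ hQ₀ne hQ₀irr hQ₀lcm
            have hpQ₀ : p ∉ Q₀ := by
              intro hmem
              exact hp.2.1 (hcop p hp.1 (sdvd_refl p) (isLcm_mem_sdvd hQ₀lcm hmem))
            have hQ : IsLcmOf S u (insert p Q₀) := by
              refine ⟨hu, ?_⟩
              rw [Finset.set_biInter_insert]
              rw [← hset, hQ₀lcm.2]
              rw [Set.inter_assoc, Set.inter_comm _ (leftSet S p)]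
            have hQirrall : ∀ x ∈ insert p Q₀, Irr S x := by
              intro x hx
              rcases Finset.mem_insert.mp hx with rfl | hx'
              · exact hp
              · exact hQ₀irr x hx'
            constructor
            · intro Q' hQ'ne hQ'irr hQ'lcm
              have hQeq : Q' = insert p Q₀ := by
                ext x
                constructor
                · intro hx
                  exact mem_of_irr_sdvd_lcm hS hhom _ hQirrall u hQ x
                    (hQ'irr x hx) (isLcm_mem_sdvd hQ'lcm hx)
                · intro hx
                  exact mem_of_irr_sdvd_lcm hS hhom _ hQ'irr u hQ'lcm x
                    (hQirrall x hx) (isLcm_mem_sdvd hQ hx)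
              rw [hQeq, Finset.card_insert_of_notMem hpQ₀, hμu, hμa₀, pow_succ]
              ring
            · intro _ hno
              exact absurd ⟨insert p Q₀, Finset.insert_nonempty p Q₀, hQirrall, hQ⟩ hno
          · -- no representation for a₀
            have hμa₀ : μ a₀ = 0 := IHa.2 ha1 hEx
            have hμu0 : μ u = 0 := by rw [hμu, hμa₀, neg_zero]
            constructor
            · intro Q' hQ'ne hQ'irr hQ'lcm
              exfalso
              have hpQ' : p ∈ Q' := mem_of_irr_sdvd_lcm hS hhom Q' hQ'irr u hQ'lcm p hp hpu
              obtain ⟨m', hm'S, hm'cop, hm'set, hm'lcm⟩ :=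
                witness_of_rep hS hhom hp hQ'irr hQ'lcm hpQ'
              have e1 : leftSet S p ∩ leftSet S m' = leftSet S u := by
                rw [Set.inter_comm]; exact hm'set
              have e2 : leftSet S p ∩ leftSet S a₀ = leftSet S u := by
                rw [Set.inter_comm]; exact hset
              have hm'a₀ : m' = a₀ :=
                hhom p m' a₀ hp.1 hm'S ha₀S hm'cop hcop (e1.trans e2.symm)
              by_cases hper : (Q'.erase p).Nonempty
              · exact hEx ⟨Q'.erase p, hper,
                  (fun x hx => hQ'irr x (Finset.mem_of_mem_erase hx)),
                  hm'a₀ ▸ hm'lcm⟩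
              · rw [Finset.not_nonempty_iff_eq_empty] at hper
                rw [hper] at hm'lcm
                have : m' = 1 := isLcmOf_unique hS hm'lcm isLcmOf_one_empty
                exact ha1 (hm'a₀ ▸ this)
            · intro _ _
              exact hμu0
      · -- no coprime complement at all
        have hμu0 : μ u = 0 := hrec.2 hC
        constructor
        · intro Q' hQ'ne hQ'irr hQ'lcm
          exfalso
          have hpQ' : p ∈ Q' := mem_of_irr_sdvd_lcm hS hhom Q' hQ'irr u hQ'lcm p hp hpu
          obtain ⟨m', hm'S, hm'cop, hm'set, _⟩ :=
            witness_of_rep hS hhom hp hQ'irr hQ'lcm hpQ'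
          exact hC ⟨m', hm'S, hm'cop, hm'set⟩
        · intro _ _
          exact hμu0

end MoebiusAux
open Classical in
theorem moebius_formula {G : Type*} [Group G] (S : Submonoid G)
    (hS : IntegralMonoid S) (hhom : Homogeneous S)
    (μ : G → ℤ)
    (hμ : ∀ z ∈ S,
      (∑ᶠ p ∈ {p : G × G | p.1 ∈ S ∧ p.2 ∈ S ∧ p.1 * p.2 = z}, μ p.1)
        = (if z = 1 then 1 else 0)) :
    μ 1 = 1 ∧
    (∀ k : ℕ, 1 ≤ k → ∀ q : Fin k → G, (∀ i, q i ∈ S) → (∀ i, tau S (q i) = 2) →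
      Function.Injective q → ∀ u ∈ S, (⋂ i, leftSet S (q i)) = leftSet S u →
        μ u = (-1) ^ k) ∧
    (∀ u ∈ S, u ≠ 1 →
      (¬ ∃ k : ℕ, 1 ≤ k ∧ ∃ q : Fin k → G, (∀ i, q i ∈ S) ∧ (∀ i, tau S (q i) = 2) ∧
        Function.Injective q ∧ (⋂ i, leftSet S (q i)) = leftSet S u) →
      μ u = 0) := by
  refine ⟨MoebiusAux.mu_one hS μ hμ, ?_, ?_⟩
  · intro k hk q hqS hqtau hqinj u hu hint
    set Q : Finset G := Finset.image q Finset.univ with hQdef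
    have hQcard : Q.card = k := by
      rw [hQdef, Finset.card_image_of_injective _ hqinj, Finset.card_univ,
        Fintype.card_fin]
    have hQne : Q.Nonempty :=
      ⟨q ⟨0, hk⟩, Finset.mem_image_of_mem q (Finset.mem_univ _)⟩
    have hQirr : ∀ x ∈ Q, MoebiusAux.Irr S x := by
      intro x hx
      obtain ⟨i, _, rfl⟩ := Finset.mem_image.mp hx
      exact (MoebiusAux.irr_iff_tau hS (hqS i)).mpr (hqtau i)
    have hbi : (⋂ x ∈ Q, leftSet S x) = ⋂ i, leftSet S (q i) := by
      ext y
      simp only [Set.mem_iInter]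
      constructor
      · intro h i
        exact h (q i) (Finset.mem_image_of_mem q (Finset.mem_univ i))
      · intro h x hx
        obtain ⟨i, _, rfl⟩ := Finset.mem_image.mp hx
        exact h i
    have hlcm : MoebiusAux.IsLcmOf S u Q := by
      refine ⟨hu, ?_⟩
      rw [hbi, hint]
      exact (Set.inter_eq_right.mpr (MoebiusAux.leftSet_subset_S hu)).symm
    have hres := (MoebiusAux.main_induction hS hhom μ hμ
      ((MoebiusAux.divFinset hS hu).card) u hu le_rfl).1 Q hQne hQirr hlcm
    rw [hQcard] at hres
    exact hres
  · intro u hu hune hnot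
    apply (MoebiusAux.main_induction hS hhom μ hμ
      ((MoebiusAux.divFinset hS hu).card) u hu le_rfl).2 hune
    rintro ⟨Q, hQne, hQirr, hQlcm⟩
    apply hnot
    refine ⟨Q.card, Finset.card_pos.mpr hQne,
      (fun i => ((Q.equivFin.symm i : Q) : G)), ?_, ?_, ?_, ?_⟩
    · intro i
      exact (hQirr _ (Q.equivFin.symm i).2).1
    · intro i
      exact (MoebiusAux.irr_iff_tau hS (hQirr _ (Q.equivFin.symm i).2).1).mp
        (hQirr _ (Q.equivFin.symm i).2)
    · intro i j h
      exact Q.equivFin.symm.injective (Subtype.ext h)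
    · have hrange : (⋂ i, leftSet S ((Q.equivFin.symm i : Q) : G))
          = ⋂ x ∈ Q, leftSet S x := by
        ext y
        simp only [Set.mem_iInter]
        constructor
        · intro h x hx
          have h2 := h (Q.equivFin ⟨x, hx⟩)
          rwa [Equiv.symm_apply_apply] at h2
        · intro h i
          exact h _ (Q.equivFin.symm i).2
      have hsubS : (⋂ x ∈ Q, leftSet S x) ⊆ (S : Set G) := by
        obtain ⟨x₀, hx₀⟩ := hQne
        intro y hy
        have hy2 : y ∈ leftSet S x₀ := by
          have := Set.mem_iInter₂.mp hy x₀ hx₀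
          exact this
        exact MoebiusAux.leftSet_subset_S (hQirr x₀ hx₀).1 hy2
      rw [hrange]
      rw [hQlcm.2, Set.inter_eq_right.mpr hsubS]
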